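/- Let A be a finite alphabet and Σ ⊆ A^{ℤ×ℤ} a sofic set of colourings. Define the dyadic encoding Φ(Σ) ⊆ (A × A)^{ℤ×ℤ} as the set of configurations z : ℤ × ℤ → A × A such that (i) the first-component configuration π₁ ∘ z belongs to Σ, and (ii) the second component satisfies π₂(z(n+1, 2k)) = π₁(z(n, k)) and π₂(z(n+1, 2k+1)) = π₂(z(n, k)) for all n, k ∈ ℤ. Then Φ(Σ) is a sofic set of colourings over the alphabet A × A. -/

import Mathlib

/-- The support of size `n`: `𝕌_n = {(p,q) : p ≤ n-1, q ≤ 2^p - 1}` (natural subtraction). -/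
def U (n : ℕ) : Set (ℕ × ℕ) := {pq | pq.1 ≤ n - 1 ∧ pq.2 ≤ 2 ^ pq.1 - 1}

instance (n : ℕ) : DecidablePred (· ∈ U n) := fun pq =>
  inferInstanceAs (Decidable (pq.1 ≤ n - 1 ∧ pq.2 ≤ 2 ^ pq.1 - 1))

instance (n : ℕ) : Fintype (U n) :=
  Fintype.ofFinset ((Finset.range (n + 1) ×ˢ Finset.range (2 ^ (n + 1))).filter (· ∈ U n))
    (by
      intro pq
      simp only [Finset.mem_filter, Finset.mem_product, Finset.mem_range]
      constructor
      · exact fun h => h.2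
      · intro h
        obtain ⟨h1, h2⟩ := h
        refine ⟨⟨by omega, ?_⟩, ⟨h1, h2⟩⟩
        have hp : 2 ^ pq.1 ≤ 2 ^ (n + 1) := Nat.pow_le_pow_right (by norm_num) (by omega)
        have : 0 < 2 ^ pq.1 := Nat.pow_pos (by norm_num)
        omega)

/-- A pattern over alphabet `A`: a size `n+1 ≥ 1` together with a colouring of `𝕌_{n+1}`. -/
def Pattern (A : Type) : Type := Σ n : ℕ, (U (n + 1) → A)

/-- The size of a pattern (always ≥ 1). -/
def Pattern.size {A : Type} (P : Pattern A) : ℕ := P.1 + 1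

instance {A : Type} [Encodable A] (n : ℕ) : Encodable (↥(U n) → A) :=
  Encodable.fintypeArrowOfEncodable

instance {A : Type} [Encodable A] : Encodable (Pattern A) :=
  inferInstanceAs (Encodable (Σ n : ℕ, (U (n + 1) → A)))

/-- `P` (with support `𝕌_n`) appears in the configuration `x` at position `(n₀, k₀)`. -/
def AppearsAt {A : Type} {n : ℕ} (P : U n → A) (x : ℤ × ℤ → A) (g : ℤ × ℤ) : Prop :=
  ∀ pq : U n, x (g.1 + (pq.1.1 : ℤ), 2 ^ pq.1.1 * g.2 + (pq.1.2 : ℤ)) = P pq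

/-- The pattern `P` appears somewhere in the configuration `x`. -/
def Pattern.Appears {A : Type} (P : Pattern A) (x : ℤ × ℤ → A) : Prop :=
  ∃ g : ℤ × ℤ, AppearsAt P.2 x g

/-- The set of colourings avoiding every pattern of `F`. -/
def colourings {A : Type} (F : Set (Pattern A)) : Set ((ℤ × ℤ) → A) :=
  {x | ∀ P ∈ F, ¬ P.Appears x}

/-- A set of colourings is of finite type (CFT). -/
def IsCFT {A : Type} (S : Set ((ℤ × ℤ) → A)) : Prop :=
  ∃ F : Set (Pattern A), F.Finite ∧ S = colourings F

/-- A set of colourings is sofic: letter-to-letter projection of a CFT. -/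
def IsSofic {A : Type} (S : Set ((ℤ × ℤ) → A)) : Prop :=
  ∃ (B : Type) (_ : Fintype B) (S' : Set ((ℤ × ℤ) → B)) (φ : B → A),
    IsCFT S' ∧ S = (fun w => φ ∘ w) '' S'

/-- A set of colourings is effective: defined by a set of forbidden patterns whose
set of codes (under the standard encoding of patterns) is recursively enumerable. -/
def IsEffective {A : Type} [Encodable A] (S : Set ((ℤ × ℤ) → A)) : Prop :=
  ∃ F : Set (Pattern A),
    REPred (fun c : ℕ => ∃ P ∈ F, Encodable.encode P = c) ∧ S = colourings F

/-- The dyadic encoding of a set of colourings `S`: configurations over `A × A` whose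
first component lies in `S` and whose second component is the dyadic encoding of the
first one, i.e. `π₂(z(n+1, 2k)) = π₁(z(n, k))` and `π₂(z(n+1, 2k+1)) = π₂(z(n, k))`. -/
def DyadicImage {A : Type} (S : Set ((ℤ × ℤ) → A)) : Set ((ℤ × ℤ) → A × A) :=
  {z | (fun g => (z g).1) ∈ S ∧
    ∀ n k : ℤ, (z (n + 1, 2 * k)).2 = (z (n, k)).1 ∧ (z (n + 1, 2 * k + 1)).2 = (z (n, k)).2}


/-!
A sofic set is the letter-to-letter image of a CFT `S'` over some alphabet `B`. Over `B × A`,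
the configurations whose first component lies in `S'` form a CFT (lift the forbidden patterns
along `Prod.fst`), and the dyadic relations between a cell and its two children are forbidden
patterns of size 2. Projecting the intersection of these two CFTs along `(b, a) ↦ (φ b, a)`
gives exactly the dyadic image of `φ '' S'`.
-/

def window {C : Type} (x : ℤ × ℤ → C) (g : ℤ × ℤ) (n : ℕ) : U n → C :=
  fun u => x (g.1 + (u.1.1 : ℤ), 2 ^ u.1.1 * g.2 + (u.1.2 : ℤ))

theorem appearsAt_iff_eq_window {C : Type} {n : ℕ} {P : U n → C} {x : ℤ × ℤ → C}
    {g : ℤ × ℤ} : AppearsAt P x g ↔ P = window x g n :=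
  ⟨fun h => funext fun u => (h u).symm, fun h => h ▸ fun _ => rfl⟩

theorem mem_colourings_iff {C : Type} {F : Set (Pattern C)} {x : ℤ × ℤ → C} :
    x ∈ colourings F ↔ ∀ (n : ℕ) (g : ℤ × ℤ), (⟨n, window x g (n + 1)⟩ : Pattern C) ∉ F := by
  constructor
  · intro h n g hmem
    exact h _ hmem ⟨g, appearsAt_iff_eq_window.2 rfl⟩
  · rintro h ⟨n, P⟩ hP ⟨g, hg⟩
    obtain rfl : P = window x g (n + 1) := appearsAt_iff_eq_window.1 hg
    exact h n g hP

theorem colourings_union {C : Type} (F G : Set (Pattern C)) :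
    colourings (F ∪ G) = colourings F ∩ colourings G := by
  ext x
  simp only [colourings, Set.mem_ofPred_eq, Set.mem_inter_iff, Set.mem_union, or_imp,
    forall_and]

theorem IsCFT.inter {C : Type} {S T : Set (ℤ × ℤ → C)} (hS : IsCFT S) (hT : IsCFT T) :
    IsCFT (S ∩ T) := by
  obtain ⟨F, hF, rfl⟩ := hS
  obtain ⟨G, hG, rfl⟩ := hT
  exact ⟨F ∪ G, hF.union hG, (colourings_union F G).symm⟩

def Pattern.map {C D : Type} (f : C → D) (P : Pattern C) : Pattern D := ⟨P.1, f ∘ P.2⟩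

theorem colourings_preimage_map {C D : Type} (f : C → D) (F : Set (Pattern D)) :
    colourings (Pattern.map f ⁻¹' F) = (fun x => f ∘ x) ⁻¹' colourings F := by
  ext x
  simp only [Set.mem_preimage, mem_colourings_iff]
  rfl

theorem Set.Finite.preimage_patternMap {C D : Type} [Finite C] (f : C → D)
    {F : Set (Pattern D)} (hF : F.Finite) : (Pattern.map f ⁻¹' F).Finite := by
  refine hF.preimage' fun ⟨n, P⟩ _ => (Set.finite_range (Sigma.mk n)).subset ?_
  rintro ⟨m, Q⟩ hQ
  obtain ⟨rfl, -⟩ := Sigma.mk.inj_iff.mp hQ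
  exact ⟨Q, rfl⟩

theorem IsCFT.preimage_comp {C D : Type} [Finite C] {S : Set (ℤ × ℤ → D)} (hS : IsCFT S)
    (f : C → D) : IsCFT ((fun x => f ∘ x) ⁻¹' S) := by
  obtain ⟨F, hF, rfl⟩ := hS
  exact ⟨_, hF.preimage_patternMap f, (colourings_preimage_map f F).symm⟩

def rootCell : U 2 := ⟨(0, 0), by constructor <;> norm_num⟩
def leftCell : U 2 := ⟨(1, 0), by constructor <;> norm_num⟩
def rightCell : U 2 := ⟨(1, 1), by constructor <;> norm_num⟩

@[simp] theorem window_rootCell {C : Type} (x : ℤ × ℤ → C) (g : ℤ × ℤ) :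
    window x g 2 rootCell = x g := by
  simp [window, rootCell]

@[simp] theorem window_leftCell {C : Type} (x : ℤ × ℤ → C) (g : ℤ × ℤ) :
    window x g 2 leftCell = x (g.1 + 1, 2 * g.2) := by
  simp [window, leftCell]

@[simp] theorem window_rightCell {C : Type} (x : ℤ × ℤ → C) (g : ℤ × ℤ) :
    window x g 2 rightCell = x (g.1 + 1, 2 * g.2 + 1) := by
  simp [window, rightCell]

-- Forbid the size-2 patterns violating `R`.
theorem isCFT_setOf_forall_children {C : Type} [Finite C] (R : C → C → C → Prop) :
    IsCFT {x : ℤ × ℤ → C |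
      ∀ n k : ℤ, R (x (n, k)) (x (n + 1, 2 * k)) (x (n + 1, 2 * k + 1))} := by
  refine ⟨Sigma.mk 1 '' {P | ¬ R (P rootCell) (P leftCell) (P rightCell)},
    (Set.toFinite _).image _, ?_⟩
  ext x
  rw [mem_colourings_iff]
  constructor
  · rintro h n g ⟨P, hP, hPx⟩
    obtain ⟨rfl, hPx⟩ := Sigma.mk.inj_iff.mp hPx
    rw [eq_of_heq hPx, Set.mem_ofPred_eq, window_rootCell, window_leftCell,
      window_rightCell] at hP
    exact hP (h g.1 g.2)
  · intro h n k
    by_contra hR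
    exact h 1 (n, k) ⟨window x (n, k) 2, by simpa using hR, rfl⟩

theorem dyadicImage_image_comp {A B : Type} (S' : Set (ℤ × ℤ → B)) (φ : B → A) :
    DyadicImage ((fun w => φ ∘ w) '' S') =
      (fun w => (fun p : B × A => (φ p.1, p.2)) ∘ w) ''
        ((fun w => Prod.fst ∘ w) ⁻¹' S' ∩
          {w | ∀ n k : ℤ, (w (n + 1, 2 * k)).2 = φ (w (n, k)).1 ∧
            (w (n + 1, 2 * k + 1)).2 = (w (n, k)).2}) := by
  ext z
  constructor
  · rintro ⟨⟨w, hw, hwz⟩, hdyadic⟩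
    have hφw : ∀ g, φ (w g) = (z g).1 := congrFun hwz
    refine ⟨fun g => (w g, (z g).2), ⟨hw, fun n k => ?_⟩, funext fun g => Prod.ext (hφw g) rfl⟩
    simpa only [hφw] using hdyadic n k
  · rintro ⟨v, ⟨hv, hlocal⟩, rfl⟩
    exact ⟨⟨_, hv, rfl⟩, hlocal⟩

theorem dyadicImage_isSofic_general {A : Type} [Fintype A]
    (S : Set ((ℤ × ℤ) → A)) (hS : IsSofic S) : IsSofic (DyadicImage S) := by
  obtain ⟨B, _, S', φ, hS', rfl⟩ := hS
  exact ⟨B × A, inferInstance, _, _,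
    (hS'.preimage_comp Prod.fst).inter
      (isCFT_setOf_forall_children fun a b c => b.2 = φ a.1 ∧ c.2 = a.2),
    dyadicImage_image_comp S' φ⟩

/-- The dyadic encoding of a sofic set of colourings is sofic. -/
theorem dyadicImage_isSofic {A : Type} [Fintype A] [Nonempty A]
    (S : Set ((ℤ × ℤ) → A)) (hS : IsSofic S) : IsSofic (DyadicImage S) :=
  dyadicImage_isSofic_general S hS
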